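/- Let α > 1. Let Φ : Matrix (Fin d_in) (Fin d_in) ℂ →ₗ[ℂ] Matrix (Fin d_out) (Fin d_out) ℂ be a linear map that is positive (maps positive semidefinite matrices to positive semidefinite matrices) and trace-preserving. Let G be a finite group with unitary representations u : G →* unitaryGroup (Fin d_in) ℂ and v : G →* unitaryGroup (Fin d_out) ℂ such that Φ((u g) ρ (u g)⁻¹) = (v g) Φ(ρ) (v g)⁻¹ for all g ∈ G and all ρ, and such that every matrix commuting with v g for all g ∈ G is a scalar multiple of the identity. Then for every density matrix σ on ℂ^{d_in} with Φ(σ) positive definite: ⨆_{ρ} D_α(Φ(ρ)‖Φ(σ)) ≥ log₂ d_out − S^min_α(Φ), where the supremum is over all density matrices ρ on ℂ^{d_in} and S^min_α(Φ) := ⨅_{ρ} (1/(1−α)) · log₂ tr(Φ(ρ)^α) is the minimum output α-Rényi entropy of Φ. Moreover equality holds for σ = (1/d_in) • 1. -/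

import Mathlib

/-!
For a density matrix `ρ`, covariance gives `Φ(u g ρ u g⁻¹)^α = v g (Φ ρ)^α (v g)⁻¹`, and by
Schur's lemma (irreducibility of `v`) the group average of these conjugates is
`(tr (Φ ρ)^α / d_out) • 1`. Hence some `g` achieves
`tr (Φ(u g ρ u g⁻¹)^α Φ(σ)^{1-α}) ≥ tr (Φ ρ)^α · tr Φ(σ)^{1-α} / d_out`, and the power-mean
inequality bounds `tr Φ(σ)^{1-α} ≥ d_out^α`; taking logarithms,
`D_α(Φ(u g ρ u g⁻¹)‖Φ σ) ≥ log₂ d_out − S_α(Φ ρ)`. For `σ = 1/d_in`, Schur's lemma and trace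
preservation give `Φ σ = 1/d_out`, against which `D_α(X‖1/d_out) = log₂ d_out − S_α(X)` exactly.
-/

open Matrix ComplexOrder

/-- Matrix power via functional calculus on eigenvalues, with the convention `0 ^ β = 0`
(matrices that are not Hermitian are sent to `0`). -/
noncomputable def mpow {d : ℕ} (A : Matrix (Fin d) (Fin d) ℂ) (β : ℝ) :
    Matrix (Fin d) (Fin d) ℂ :=
  if hA : A.IsHermitian then
    (hA.eigenvectorUnitary : Matrix (Fin d) (Fin d) ℂ) *
      Matrix.diagonal (fun i =>
        ((if hA.eigenvalues i = 0 then (0 : ℝ) else hA.eigenvalues i ^ β : ℝ) : ℂ)) *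
      star (hA.eigenvectorUnitary : Matrix (Fin d) (Fin d) ℂ)
  else 0

/-- The relative Rényi `α`-entropy `D_α(ρ‖σ) = (1/(α−1)) log₂ tr(ρ^α σ^{1−α})`. -/
noncomputable def Dalpha {d : ℕ} (α : ℝ) (ρ σ : Matrix (Fin d) (Fin d) ℂ) : ℝ :=
  (1 / (α - 1)) * Real.logb 2 ((mpow ρ α * mpow σ (1 - α)).trace).re

section UnitaryConj

variable {n : Type*} [Fintype n] [DecidableEq n]

lemma Matrix.UnitaryGroup.nonsing_inv_coe (W : unitaryGroup n ℂ) :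
    (W : Matrix n n ℂ)⁻¹ = star (W : Matrix n n ℂ) :=
  inv_eq_left_inv (UnitaryGroup.star_mul_self W)

lemma Matrix.trace_unitary_conj (W : unitaryGroup n ℂ) (A : Matrix n n ℂ) :
    ((W : Matrix n n ℂ) * A * star (W : Matrix n n ℂ)).trace = A.trace := by
  rw [trace_mul_cycle, UnitaryGroup.star_mul_self, one_mul]

lemma Matrix.PosSemidef.unitary_conj {A : Matrix n n ℂ} (hA : A.PosSemidef)
    (W : unitaryGroup n ℂ) : ((W : Matrix n n ℂ) * A * star (W : Matrix n n ℂ)).PosSemidef :=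
  hA.mul_mul_conjTranspose_same (W : Matrix n n ℂ)

lemma cfc_unitary_conj (W : unitaryGroup n ℂ) (f : ℝ → ℝ) {A : Matrix n n ℂ}
    (hA : A.IsHermitian) :
    cfc f ((W : Matrix n n ℂ) * A * star (W : Matrix n n ℂ)) =
      W * cfc f A * star (W : Matrix n n ℂ) :=
  (StarAlgHomClass.map_cfc (Unitary.conjStarAlgAut ℂ _ W) f A
    (hf := A.finite_real_spectrum.continuousOn f)
    (hφ := (continuous_const.matrix_mul continuous_id).matrix_mul continuous_const)
    (hφa := hA.isSelfAdjoint.conjugate _)).symm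

end UnitaryConj

section SpectralTrace

variable {n : Type*} [Fintype n] [DecidableEq n] {A : Matrix n n ℂ}

lemma Matrix.IsHermitian.trace_cfc_mul (hA : A.IsHermitian) (f : ℝ → ℝ) (B : Matrix n n ℂ) :
    (cfc f A * B).trace = ∑ i, (f (hA.eigenvalues i) : ℂ) *
      (star (hA.eigenvectorUnitary : Matrix n n ℂ) * B * hA.eigenvectorUnitary) i i := by
  rw [hA.cfc_eq, IsHermitian.cfc, Unitary.conjStarAlgAut_apply, mul_assoc, trace_mul_cycle]
  simp [trace, mul_diagonal, mul_comm]

lemma Matrix.IsHermitian.trace_cfc (hA : A.IsHermitian) (f : ℝ → ℝ) :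
    (cfc f A).trace = ((∑ i, f (hA.eigenvalues i) : ℝ) : ℂ) := by
  simpa [UnitaryGroup.star_mul_self] using hA.trace_cfc_mul f 1

lemma Matrix.IsHermitian.posSemidef_cfc (hA : A.IsHermitian) {f : ℝ → ℝ}
    (hf : ∀ i, 0 ≤ f (hA.eigenvalues i)) : (cfc f A).PosSemidef := by
  rw [hA.cfc_eq, IsHermitian.cfc, Unitary.conjStarAlgAut_apply]
  exact (PosSemidef.diagonal fun i => by simpa using hf i).unitary_conj _

end SpectralTrace

section MatrixPower

variable {d : ℕ} {A : Matrix (Fin d) (Fin d) ℂ} {β : ℝ}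

lemma mpow_eq_cfc (hA : A.IsHermitian) (hβ : β ≠ 0) : mpow A β = cfc (fun t : ℝ => t ^ β) A := by
  rw [hA.cfc_eq, mpow, dif_pos hA, IsHermitian.cfc, Unitary.conjStarAlgAut_apply]
  congr 3
  funext i
  by_cases h : hA.eigenvalues i = 0 <;> simp [h, Real.zero_rpow hβ]

lemma mpow_unitary_conj (hA : A.IsHermitian) (hβ : β ≠ 0) (W : unitaryGroup (Fin d) ℂ) :
    mpow ((W : Matrix (Fin d) (Fin d) ℂ) * A * star (W : Matrix (Fin d) (Fin d) ℂ)) β =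
      W * mpow A β * star (W : Matrix (Fin d) (Fin d) ℂ) := by
  rw [mpow_eq_cfc (hA.isSelfAdjoint.conjugate _) hβ, mpow_eq_cfc hA hβ, cfc_unitary_conj W _ hA]

lemma trace_mpow (hA : A.IsHermitian) (hβ : β ≠ 0) :
    (mpow A β).trace = ((∑ i, hA.eigenvalues i ^ β : ℝ) : ℂ) := by
  rw [mpow_eq_cfc hA hβ, hA.trace_cfc]

lemma posSemidef_mpow (hA : A.PosSemidef) (hβ : β ≠ 0) : (mpow A β).PosSemidef := by
  rw [mpow_eq_cfc hA.1 hβ]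
  exact hA.1.posSemidef_cfc fun i => Real.rpow_nonneg (hA.eigenvalues_nonneg i) β

lemma mpow_ofReal_smul_one (r : ℝ) (hβ : β ≠ 0) :
    mpow ((r : ℂ) • (1 : Matrix (Fin d) (Fin d) ℂ)) β = ((r ^ β : ℝ) : ℂ) • 1 := by
  rw [Complex.coe_smul, Complex.coe_smul, ← Algebra.algebraMap_eq_smul_one,
    ← Algebra.algebraMap_eq_smul_one, mpow_eq_cfc (IsSelfAdjoint.algebraMap _ (.all r)) hβ, cfc_algebraMap]

end MatrixPower

section ProbabilityVector

variable {ι : Type*} [Fintype ι] {p : ι → ℝ}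

lemma sum_rpow_pos (hp0 : ∀ i, 0 ≤ p i) (hp1 : ∑ i, p i = 1) (α : ℝ) : 0 < ∑ i, p i ^ α := by
  obtain ⟨i, -, hi⟩ :=
    Finset.exists_lt_of_sum_lt (s := Finset.univ) (f := 0) (g := p) (by simp [hp1])
  exact Finset.sum_pos' (fun j _ => Real.rpow_nonneg (hp0 j) α)
    ⟨i, Finset.mem_univ i, Real.rpow_pos_of_pos hi α⟩

lemma sum_rpow_le_one (hp0 : ∀ i, 0 ≤ p i) (hp1 : ∑ i, p i = 1) {α : ℝ} (hα : 1 ≤ α) :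
    ∑ i, p i ^ α ≤ 1 := by
  refine hp1 ▸ Finset.sum_le_sum fun i _ => ?_
  have hpi : p i ≤ 1 := hp1 ▸ Finset.single_le_sum (fun j _ => hp0 j) (Finset.mem_univ i)
  exact Real.rpow_le_self_of_le_one (hp0 i) hpi hα

lemma card_rpow_le_sum_rpow_one_sub (hp0 : ∀ i, 0 < p i) (hp1 : ∑ i, p i = 1) {α : ℝ}
    (hα : 1 ≤ α) : (Fintype.card ι : ℝ) ^ α ≤ ∑ i, p i ^ (1 - α) := by
  -- the power-mean inequality for the points `1 / pᵢ` with weights `pᵢ`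
  have h := Real.rpow_arith_mean_le_arith_mean_rpow Finset.univ p (fun i => (p i)⁻¹)
    (fun i _ => (hp0 i).le) hp1 (fun i _ => (inv_pos.2 (hp0 i)).le) hα
  have hpp : ∀ i, p i * (p i)⁻¹ ^ α = p i ^ (1 - α) := fun i => by
    rw [Real.inv_rpow (hp0 i).le, Real.rpow_sub (hp0 i), Real.rpow_one, div_eq_mul_inv]
  simpa [(hp0 _).ne', hpp] using h

end ProbabilityVector

section RealBounds

variable {b : ℝ}

lemma Real.logb_le_logb_max_one (hb : 1 < b) {x y : ℝ} (hx : 0 ≤ x) (hxy : x ≤ y) :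
    Real.logb b x ≤ Real.logb b (max 1 y) := by
  rcases hx.eq_or_lt with rfl | hx
  · simpa using Real.logb_nonneg hb (le_max_left 1 y)
  · exact Real.logb_le_logb_of_le hb hx (hxy.trans (le_max_right 1 y))

lemma Real.logb_sub_le_of_mul_rpow_le (hb : 1 < b) {α d T x : ℝ} (hα : 1 < α) (hd : 0 < d)
    (hT : 0 < T) (h : T * d ^ (α - 1) ≤ x) :
    Real.logb b d - 1 / (1 - α) * Real.logb b T ≤ 1 / (α - 1) * Real.logb b x := by
  have hα' : 0 < α - 1 := sub_pos.2 hα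
  have hlhs : Real.logb b d - 1 / (1 - α) * Real.logb b T =
      1 / (α - 1) * Real.logb b (T * d ^ (α - 1)) := by
    rw [Real.logb_mul hT.ne' (by positivity), Real.logb_rpow_eq_mul_logb_of_pos hd]
    have : 1 - α ≠ 0 := by linarith
    field_simp
    ring
  rw [hlhs]
  exact mul_le_mul_of_nonneg_left (Real.logb_le_logb_of_le hb (by positivity) h) (by positivity)

lemma sub_ciInf_le_ciSup {ι κ : Type*} [Nonempty ι] {f : ι → ℝ} {g : κ → ℝ} {c : ℝ}
    (hg : BddAbove (Set.range g)) (h : ∀ i, ∃ j, c - f i ≤ g j) : c - ⨅ i, f i ≤ ⨆ j, g j :=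
  sub_le_comm.1 <| le_ciInf fun i =>
    let ⟨j, hj⟩ := h i
    sub_le_comm.1 (hj.trans (le_ciSup hg j))

lemma ciSup_const_sub {ι : Type*} [Nonempty ι] {f : ι → ℝ} (hf : BddBelow (Set.range f))
    (c : ℝ) : ⨆ i, (c - f i) = c - ⨅ i, f i :=
  ((OrderIso.subLeft c).map_ciInf hf).symm

end RealBounds

/-- `S^min_α(Φ)` is `⨅ ρ, renyiEntropy α (Φ ρ)` over density matrices `ρ`. -/
noncomputable def renyiEntropy {d : ℕ} (α : ℝ) (ρ : Matrix (Fin d) (Fin d) ℂ) : ℝ :=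
  (1 / (1 - α)) * Real.logb 2 ((mpow ρ α).trace).re

section DensityMatrix

variable {d : ℕ} {α : ℝ} {X S : Matrix (Fin d) (Fin d) ℂ}

lemma Matrix.pos_of_trace_eq_one (htr : X.trace = 1) : 0 < d :=
  Nat.pos_of_ne_zero <| by rintro rfl; simp [trace] at htr

lemma Matrix.IsHermitian.sum_eigenvalues_eq_one (hX : X.IsHermitian) (htr : X.trace = 1) :
    ∑ i, hX.eigenvalues i = 1 := by
  simpa [htr] using congrArg Complex.re hX.trace_eq_sum_eigenvalues.symm

lemma renyiEntropy_nonneg (hX : X.PosSemidef) (htr : X.trace = 1) (hα : 1 < α) :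
    0 ≤ renyiEntropy α X := by
  have hsum := hX.1.sum_eigenvalues_eq_one htr
  rw [renyiEntropy, trace_mpow hX.1 (by positivity), Complex.ofReal_re]
  refine mul_nonneg_of_nonpos_of_nonpos (by rw [one_div_nonpos]; linarith) ?_
  exact Real.logb_nonpos one_lt_two (sum_rpow_pos hX.eigenvalues_nonneg hsum α).le
    (sum_rpow_le_one hX.eigenvalues_nonneg hsum hα.le)

lemma Dalpha_inv_natCast_smul_one (hX : X.PosSemidef) (htr : X.trace = 1) (hα : 1 < α) :
    Dalpha α X ((d : ℂ)⁻¹ • 1) = Real.logb 2 d - renyiEntropy α X := by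
  have hd : (0 : ℝ) < d := Nat.cast_pos.2 (pos_of_trace_eq_one htr)
  have hT := sum_rpow_pos hX.eigenvalues_nonneg (hX.1.sum_eigenvalues_eq_one htr) α
  have hinv : (d : ℂ)⁻¹ = (((d : ℝ)⁻¹ : ℝ) : ℂ) := by push_cast; rfl
  have h1α : 1 - α ≠ 0 := by linarith
  rw [Dalpha, renyiEntropy, hinv, mpow_ofReal_smul_one _ h1α, mul_smul_comm, mul_one, trace_smul,
    trace_mpow hX.1 (by positivity), smul_eq_mul, ← Complex.ofReal_mul, Complex.ofReal_re,
    Complex.ofReal_re, Real.logb_mul (by positivity) hT.ne', Real.inv_rpow hd.le, Real.logb_inv,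
    Real.logb_rpow_eq_mul_logb_of_pos hd]
  have : α - 1 ≠ 0 := by linarith
  field_simp
  ring

lemma re_trace_mpow_mul_mem_Icc (hX : X.PosSemidef) (htr : X.trace = 1) (hα : 1 ≤ α)
    {B : Matrix (Fin d) (Fin d) ℂ} (hB : B.PosSemidef) :
    ((mpow X α * B).trace).re ∈ Set.Icc 0 B.trace.re := by
  set U : Matrix (Fin d) (Fin d) ℂ := ↑hX.1.eigenvectorUnitary
  have hQ : (star U * B * U).PosSemidef := hB.conjTranspose_mul_mul_same U
  have hQdiag : ∀ i, 0 ≤ ((star U * B * U) i i).re := fun i =>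
    (Complex.nonneg_iff.1 hQ.diag_nonneg).1
  have hQtr : ∑ i, ((star U * B * U) i i).re = B.trace.re := by
    rw [← Complex.re_sum]
    change (star U * B * U).trace.re = _
    rw [trace_mul_cycle, Unitary.mul_star_self_of_mem hX.1.eigenvectorUnitary.2, one_mul]
  have hev : ∀ i, 0 ≤ hX.1.eigenvalues i ^ α ∧ hX.1.eigenvalues i ^ α ≤ 1 := fun i =>
    have hev1 : hX.1.eigenvalues i ≤ 1 := hX.1.sum_eigenvalues_eq_one htr ▸
      Finset.single_le_sum (fun j _ => hX.eigenvalues_nonneg j) (Finset.mem_univ i)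
    ⟨Real.rpow_nonneg (hX.eigenvalues_nonneg i) α,
      Real.rpow_le_one (hX.eigenvalues_nonneg i) hev1 (by linarith)⟩
  rw [mpow_eq_cfc hX.1 (by positivity), hX.1.trace_cfc_mul, Complex.re_sum]
  simp only [Complex.re_ofReal_mul]
  exact ⟨Finset.sum_nonneg fun i _ => mul_nonneg (hev i).1 (hQdiag i),
    hQtr ▸ Finset.sum_le_sum fun i _ => mul_le_of_le_one_left (hQdiag i) (hev i).2⟩

lemma Dalpha_le (hX : X.PosSemidef) (htr : X.trace = 1) (hα : 1 < α) (hS : S.PosSemidef) :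
    Dalpha α X S ≤ 1 / (α - 1) * Real.logb 2 (max 1 (mpow S (1 - α)).trace.re) := by
  obtain ⟨h0, hle⟩ :=
    re_trace_mpow_mul_mem_Icc hX htr hα.le (posSemidef_mpow hS (by linarith : 1 - α ≠ 0))
  have : 0 ≤ 1 / (α - 1) := one_div_nonneg.2 (by linarith)
  exact mul_le_mul_of_nonneg_left (Real.logb_le_logb_max_one one_lt_two h0 hle) this

lemma rpow_le_re_trace_mpow_one_sub (hS : S.PosDef) (htr : S.trace = 1) (hα : 1 < α) :
    (d : ℝ) ^ α ≤ (mpow S (1 - α)).trace.re := by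
  rw [trace_mpow hS.1 (by linarith), Complex.ofReal_re]
  simpa using card_rpow_le_sum_rpow_one_sub hS.eigenvalues_pos
    (hS.1.sum_eigenvalues_eq_one htr) hα.le

end DensityMatrix

section GroupAverage

variable {n : Type*} [Fintype n] [DecidableEq n] {G : Type*} [Group G] [Fintype G]

lemma commute_sum_unitary_conj (v : G →* unitaryGroup n ℂ) (A : Matrix n n ℂ) (h : G) :
    Commute (v h : Matrix n n ℂ) (∑ g, (v g : Matrix n n ℂ) * A * star (v g : Matrix n n ℂ)) := by
  rw [Commute, SemiconjBy, Finset.mul_sum, Finset.sum_mul]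
  refine Fintype.sum_equiv (Equiv.mulLeft h) _ _ fun g => ?_
  simp only [Equiv.coe_mulLeft, map_mul, Submonoid.coe_mul, star_mul, mul_assoc,
    UnitaryGroup.star_mul_self, mul_one]

lemma exists_le_re_trace_unitary_conj_mul [Nonempty n] (v : G →* unitaryGroup n ℂ)
    (hirr : ∀ N : Matrix n n ℂ, (∀ g, (v g : Matrix n n ℂ) * N = N * v g) → ∃ c : ℂ, N = c • 1)
    (A B : Matrix n n ℂ) :
    ∃ g, (A.trace * B.trace).re / Fintype.card n ≤
      ((v g : Matrix n n ℂ) * A * star (v g : Matrix n n ℂ) * B).trace.re := by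
  -- Schur's lemma: the group average of the conjugates of `A` is `(tr A / card n) • 1`
  obtain ⟨c, hc⟩ := hirr _ fun h => (commute_sum_unitary_conj v A h).eq
  have hn : (Fintype.card n : ℂ) ≠ 0 := Nat.cast_ne_zero.2 Fintype.card_ne_zero
  have hc_eq : c = Fintype.card G * A.trace / Fintype.card n := by
    have htr := congrArg trace hc
    simp only [trace_sum, trace_unitary_conj, Finset.sum_const, Finset.card_univ, nsmul_eq_mul,
      trace_smul, trace_one, smul_eq_mul] at htr
    field_simp
    exact htr.symm
  have hsum : ∑ g, ((v g : Matrix n n ℂ) * A * star (v g : Matrix n n ℂ) * B).trace =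
      c * B.trace := by
    rw [← trace_sum, ← Finset.sum_mul, hc, smul_mul_assoc, one_mul, trace_smul, smul_eq_mul]
  have hmean : ∑ _g : G, (A.trace * B.trace).re / Fintype.card n =
      ∑ g, ((v g : Matrix n n ℂ) * A * star (v g : Matrix n n ℂ) * B).trace.re := by
    rw [← Complex.re_sum, hsum, hc_eq, Finset.sum_const, Finset.card_univ, nsmul_eq_mul,
      show (Fintype.card G : ℂ) * A.trace / Fintype.card n * B.trace =
        ((Fintype.card G / Fintype.card n : ℝ) : ℂ) * (A.trace * B.trace) by push_cast; ring,
      Complex.re_ofReal_mul]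
    ring
  simpa using Finset.exists_le_of_sum_le Finset.univ_nonempty hmean.le

lemma exists_logb_sub_renyiEntropy_le_Dalpha_unitary_conj {d : ℕ} {α : ℝ} (hα : 1 < α)
    (v : G →* unitaryGroup (Fin d) ℂ)
    (hirr : ∀ N : Matrix (Fin d) (Fin d) ℂ,
      (∀ g, (v g : Matrix (Fin d) (Fin d) ℂ) * N = N * v g) → ∃ c : ℂ, N = c • 1)
    {X S : Matrix (Fin d) (Fin d) ℂ} (hX : X.PosSemidef) (hXtr : X.trace = 1)
    (hS : S.PosDef) (hStr : S.trace = 1) :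
    ∃ g, Real.logb 2 d - renyiEntropy α X ≤
      Dalpha α ((v g : Matrix (Fin d) (Fin d) ℂ) * X * star (v g : Matrix (Fin d) (Fin d) ℂ))
        S := by
  have hd := pos_of_trace_eq_one hXtr
  have : Nonempty (Fin d) := ⟨⟨0, hd⟩⟩
  have hα0 : α ≠ 0 := by positivity
  obtain ⟨g, hg⟩ := exists_le_re_trace_unitary_conj_mul v hirr (mpow X α) (mpow S (1 - α))
  refine ⟨g, ?_⟩
  have hT : 0 < (mpow X α).trace.re := by
    rw [trace_mpow hX.1 hα0, Complex.ofReal_re]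
    exact sum_rpow_pos hX.eigenvalues_nonneg (hX.1.sum_eigenvalues_eq_one hXtr) α
  rw [Dalpha, mpow_unitary_conj hX.1 hα0 (v g), renyiEntropy]
  refine Real.logb_sub_le_of_mul_rpow_le one_lt_two hα (by positivity) hT ?_
  calc (mpow X α).trace.re * (d : ℝ) ^ (α - 1)
      = (mpow X α).trace.re * (d : ℝ) ^ α / d := by
        rw [Real.rpow_sub_one (by positivity)]; ring
    _ ≤ (mpow X α).trace.re * (mpow S (1 - α)).trace.re / d := by
        gcongr; exact rpow_le_re_trace_mpow_one_sub hS hStr hα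
    _ = ((mpow X α).trace * (mpow S (1 - α)).trace).re / d := by
        rw [trace_mpow hX.1 hα0, trace_mpow hS.1 (by linarith), ← Complex.ofReal_mul]
        simp only [Complex.ofReal_re]
    _ ≤ _ := by simpa using hg

end GroupAverage

section CovariantMap

variable {n m : Type*} [Fintype n] [DecidableEq n] [Fintype m] [DecidableEq m]
  {G : Type*} [Monoid G]

lemma map_one_eq_smul_one (Φ : Matrix n n ℂ →ₗ[ℂ] Matrix m m ℂ)
    (hΦ_tr : ∀ ρ, (Φ ρ).trace = ρ.trace) (u : G →* unitaryGroup n ℂ) (v : G →* unitaryGroup m ℂ)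
    (hcov : ∀ g ρ, Φ ((u g : Matrix n n ℂ) * ρ * star (u g : Matrix n n ℂ)) =
      (v g : Matrix m m ℂ) * Φ ρ * star (v g : Matrix m m ℂ))
    (hirr : ∀ N : Matrix m m ℂ, (∀ g, (v g : Matrix m m ℂ) * N = N * v g) → ∃ c : ℂ, N = c • 1) :
    Φ 1 = ((Fintype.card n : ℂ) / Fintype.card m) • 1 := by
  rcases isEmpty_or_nonempty m with hm | hm
  · exact Subsingleton.elim _ _
  obtain ⟨c, hc⟩ := hirr (Φ 1) fun g => by
    have h := hcov g 1
    rw [mul_one, Unitary.mul_star_self_of_mem (u g).2] at h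
    conv_rhs => rw [h, mul_assoc, UnitaryGroup.star_mul_self, mul_one]
  have htr := hΦ_tr 1
  rw [hc, trace_smul, trace_one, trace_one, smul_eq_mul] at htr
  rw [hc, ← htr, mul_div_cancel_right₀ _ (Nat.cast_ne_zero.2 Fintype.card_ne_zero)]

end CovariantMap

theorem covariant_channel_sup_Dalpha_general
    (d_in d_out : ℕ) (hd_in : 0 < d_in)
    (α : ℝ) (hα : 1 < α)
    (Φ : Matrix (Fin d_in) (Fin d_in) ℂ →ₗ[ℂ] Matrix (Fin d_out) (Fin d_out) ℂ)
    (hΦ_pos : ∀ ρ : Matrix (Fin d_in) (Fin d_in) ℂ, ρ.PosSemidef → (Φ ρ).PosSemidef)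
    (hΦ_tr : ∀ ρ : Matrix (Fin d_in) (Fin d_in) ℂ, (Φ ρ).trace = ρ.trace)
    (G : Type*) [Group G] [Fintype G]
    (u : G →* Matrix.unitaryGroup (Fin d_in) ℂ)
    (v : G →* Matrix.unitaryGroup (Fin d_out) ℂ)
    (hcov : ∀ (g : G) (ρ : Matrix (Fin d_in) (Fin d_in) ℂ),
      Φ ((u g : Matrix (Fin d_in) (Fin d_in) ℂ) * ρ * ((u g)⁻¹ : Matrix (Fin d_in) (Fin d_in) ℂ)) =
        (v g : Matrix (Fin d_out) (Fin d_out) ℂ) * Φ ρ *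
          ((v g)⁻¹ : Matrix (Fin d_out) (Fin d_out) ℂ))
    (hirr : ∀ N : Matrix (Fin d_out) (Fin d_out) ℂ,
      (∀ g : G, (v g : Matrix (Fin d_out) (Fin d_out) ℂ) * N =
          N * (v g : Matrix (Fin d_out) (Fin d_out) ℂ)) →
        ∃ c : ℂ, N = c • (1 : Matrix (Fin d_out) (Fin d_out) ℂ)) :
    (∀ σ : Matrix (Fin d_in) (Fin d_in) ℂ, σ.PosSemidef → σ.trace = 1 → (Φ σ).PosDef →
      Real.logb 2 d_out -
          (⨅ ρ : {ρ : Matrix (Fin d_in) (Fin d_in) ℂ // ρ.PosSemidef ∧ ρ.trace = 1},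
            (1 / (1 - α)) * Real.logb 2 ((mpow (Φ (ρ : Matrix (Fin d_in) (Fin d_in) ℂ)) α).trace).re) ≤
        ⨆ ρ : {ρ : Matrix (Fin d_in) (Fin d_in) ℂ // ρ.PosSemidef ∧ ρ.trace = 1},
          Dalpha α (Φ (ρ : Matrix (Fin d_in) (Fin d_in) ℂ)) (Φ σ)) ∧
    (⨆ ρ : {ρ : Matrix (Fin d_in) (Fin d_in) ℂ // ρ.PosSemidef ∧ ρ.trace = 1},
        Dalpha α (Φ (ρ : Matrix (Fin d_in) (Fin d_in) ℂ))
          (Φ (((d_in : ℂ))⁻¹ • (1 : Matrix (Fin d_in) (Fin d_in) ℂ)))) =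
      Real.logb 2 d_out -
        (⨅ ρ : {ρ : Matrix (Fin d_in) (Fin d_in) ℂ // ρ.PosSemidef ∧ ρ.trace = 1},
          (1 / (1 - α)) * Real.logb 2 ((mpow (Φ (ρ : Matrix (Fin d_in) (Fin d_in) ℂ)) α).trace).re) := by
  have hcov' : ∀ g ρ, Φ ((u g : Matrix _ _ ℂ) * ρ * star (u g : Matrix _ _ ℂ)) =
      (v g : Matrix _ _ ℂ) * Φ ρ * star (v g : Matrix _ _ ℂ) := by
    simpa only [UnitaryGroup.nonsing_inv_coe] using hcov
  have hout : ∀ ρ : {ρ : Matrix (Fin d_in) (Fin d_in) ℂ // ρ.PosSemidef ∧ ρ.trace = 1},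
      (Φ ρ).PosSemidef ∧ (Φ ρ).trace = 1 := fun ρ => ⟨hΦ_pos _ ρ.2.1, (hΦ_tr _).trans ρ.2.2⟩
  have hd_in' : (d_in : ℂ) ≠ 0 := Nat.cast_ne_zero.2 hd_in.ne'
  have : Nonempty {ρ : Matrix (Fin d_in) (Fin d_in) ℂ // ρ.PosSemidef ∧ ρ.trace = 1} :=
    ⟨⟨(d_in : ℂ)⁻¹ • 1, PosSemidef.one.smul (by simp), by simp [trace_smul, hd_in']⟩⟩
  refine ⟨fun σ _ hσtr hΦσ => sub_ciInf_le_ciSup ?_ fun ρ => ?_, ?_⟩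
  · exact ⟨_, Set.forall_mem_range.2 fun ρ => Dalpha_le (hout ρ).1 (hout ρ).2 hα hΦσ.posSemidef⟩
  · obtain ⟨g, hg⟩ := exists_logb_sub_renyiEntropy_le_Dalpha_unitary_conj hα v hirr
      (hout ρ).1 (hout ρ).2 hΦσ ((hΦ_tr σ).trans hσtr)
    exact ⟨⟨_, ρ.2.1.unitary_conj (u g), (trace_unitary_conj _ _).trans ρ.2.2⟩, by rwa [hcov']⟩
  · have hmixed : Φ ((d_in : ℂ)⁻¹ • 1) = (d_out : ℂ)⁻¹ • 1 := by
      rw [map_smul, map_one_eq_smul_one Φ hΦ_tr u v hcov' hirr, smul_smul, Fintype.card_fin,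
        Fintype.card_fin, div_eq_mul_inv, inv_mul_cancel_left₀ hd_in']
    rw [hmixed, iSup_congr fun ρ => Dalpha_inv_natCast_smul_one (hout ρ).1 (hout ρ).2 hα]
    refine ciSup_const_sub ⟨0, Set.forall_mem_range.2 fun ρ => ?_⟩ _
    exact renyiEntropy_nonneg (hout ρ).1 (hout ρ).2 hα

/-- **Evaluation of the relative-entropy bound for covariant channels.**
For a positive trace-preserving map `Φ` that is covariant with respect to representations
`u, v` of a finite group `G` (with `v` irreducible), every density matrix `σ` with `Φ σ`
positive definite satisfies `⨆_ρ D_α(Φ ρ‖Φ σ) ≥ log₂ d_out − S^min_α(Φ)`, with equality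
for `σ = (1/d_in) • 1`. -/
theorem covariant_channel_sup_Dalpha
    (d_in d_out : ℕ) (hd_in : 0 < d_in) (hd_out : 0 < d_out)
    (α : ℝ) (hα : 1 < α)
    (Φ : Matrix (Fin d_in) (Fin d_in) ℂ →ₗ[ℂ] Matrix (Fin d_out) (Fin d_out) ℂ)
    (hΦ_pos : ∀ ρ : Matrix (Fin d_in) (Fin d_in) ℂ, ρ.PosSemidef → (Φ ρ).PosSemidef)
    (hΦ_tr : ∀ ρ : Matrix (Fin d_in) (Fin d_in) ℂ, (Φ ρ).trace = ρ.trace)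
    (G : Type*) [Group G] [Fintype G]
    (u : G →* Matrix.unitaryGroup (Fin d_in) ℂ)
    (v : G →* Matrix.unitaryGroup (Fin d_out) ℂ)
    (hcov : ∀ (g : G) (ρ : Matrix (Fin d_in) (Fin d_in) ℂ),
      Φ ((u g : Matrix (Fin d_in) (Fin d_in) ℂ) * ρ * ((u g)⁻¹ : Matrix (Fin d_in) (Fin d_in) ℂ)) =
        (v g : Matrix (Fin d_out) (Fin d_out) ℂ) * Φ ρ *
          ((v g)⁻¹ : Matrix (Fin d_out) (Fin d_out) ℂ))
    (hirr : ∀ N : Matrix (Fin d_out) (Fin d_out) ℂ,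
      (∀ g : G, (v g : Matrix (Fin d_out) (Fin d_out) ℂ) * N =
          N * (v g : Matrix (Fin d_out) (Fin d_out) ℂ)) →
        ∃ c : ℂ, N = c • (1 : Matrix (Fin d_out) (Fin d_out) ℂ)) :
    (∀ σ : Matrix (Fin d_in) (Fin d_in) ℂ, σ.PosSemidef → σ.trace = 1 → (Φ σ).PosDef →
      Real.logb 2 d_out -
          (⨅ ρ : {ρ : Matrix (Fin d_in) (Fin d_in) ℂ // ρ.PosSemidef ∧ ρ.trace = 1},
            (1 / (1 - α)) * Real.logb 2 ((mpow (Φ (ρ : Matrix (Fin d_in) (Fin d_in) ℂ)) α).trace).re) ≤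
        ⨆ ρ : {ρ : Matrix (Fin d_in) (Fin d_in) ℂ // ρ.PosSemidef ∧ ρ.trace = 1},
          Dalpha α (Φ (ρ : Matrix (Fin d_in) (Fin d_in) ℂ)) (Φ σ)) ∧
    (⨆ ρ : {ρ : Matrix (Fin d_in) (Fin d_in) ℂ // ρ.PosSemidef ∧ ρ.trace = 1},
        Dalpha α (Φ (ρ : Matrix (Fin d_in) (Fin d_in) ℂ))
          (Φ (((d_in : ℂ))⁻¹ • (1 : Matrix (Fin d_in) (Fin d_in) ℂ)))) =
      Real.logb 2 d_out -
        (⨅ ρ : {ρ : Matrix (Fin d_in) (Fin d_in) ℂ // ρ.PosSemidef ∧ ρ.trace = 1},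
          (1 / (1 - α)) * Real.logb 2 ((mpow (Φ (ρ : Matrix (Fin d_in) (Fin d_in) ℂ)) α).trace).re) :=
  covariant_channel_sup_Dalpha_general d_in d_out hd_in α hα Φ hΦ_pos hΦ_tr G u v hcov hirr
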